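/- arXiv:1507.00619 — 2 statements merged into one kernel-verified Lean document; each statement's English description precedes it below -/
import Mathlib

section
/- (Induction step for the nullspace lemma.) Let N ≥ 5 and suppose M^{(N)} ∈ R^{2N×2N} has nullspace spanned by (−b, a) ∈ R^{2N} where a = (a₁,...,a_N), b = (b₁,...,b_N), and a₁ b₂ ≠ a₂ b₁. Form M^{(N+1)} ∈ R^{(2N+2)×(2N+2)} by embedding M^{(N)} (acting on coordinates (v₁..v_N, w₁..w_N) of R^{2N+2}, ignoring v_{N+1}, w_{N+1}) and appending the two rows r_{N+1,1} and r_{N+1,2} defined via: row r_{N+1,k} has entries A_{N+1}^- at position k, A_k^+ at position N+1, B_{N+1}^+ at position (N+1)+k, B_k^- at position 2(N+1), where A_k^± = |α||β|(cos φ a_k ± sin φ b_k), B_k^± = |α||β|(cos φ b_k ± sin φ a_k), and |α||β| ≠ 0. Then the nullspace of M^{(N+1)} is spanned by (−b₁,...,−b_{N+1}, a₁,...,a_{N+1})^T. -/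
/-!
The old rows only see the first `N` coordinates of each half, so a kernel vector `x` of
`M⁽ᴺ⁺¹⁾` agrees there with `c • (-b, a)` for some `c`. The full vector `(-b, a)` lies in the
kernel too, hence so does `d = x - c • (-b, a)`, which is supported on the two new coordinates.
On `d` the two appended rows reduce to a `2 × 2` system with matrix `[A₁⁺ B₁⁻; A₂⁺ B₂⁻]`, whose
determinant `(‖α‖‖β‖)² (a₁b₂ - a₂b₁)` is nonzero, so `d = 0`.
-/

open Matrix

theorem sum_ite_ite_mul {ι R : Type*} [Fintype ι] [DecidableEq ι] [NonUnitalNonAssocSemiring R]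
    {i j : ι} (hij : i ≠ j) (A B : R) (x : ι → R) :
    ∑ l, (if l = i then A else if l = j then B else 0) * x l = A * x i + B * x j := by
  rw [Fintype.sum_eq_add i j hij]
  · simp [hij.symm]
  · intro l hl
    simp [hl.1, hl.2]

theorem Matrix.mulVec_eq_mulVec_comp_castSucc {R m : Type*} [NonUnitalNonAssocSemiring R]
    {n : ℕ} (M : Matrix m (Fin n ⊕ Fin n) R)
    (M' : Matrix m (Fin (n + 1) ⊕ Fin (n + 1)) R)
    (h₁ : ∀ r (k : Fin n), M' r (.inl k.castSucc) = M r (.inl k))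
    (h₂ : ∀ r (k : Fin n), M' r (.inr k.castSucc) = M r (.inr k))
    (h₃ : ∀ r, M' r (.inl (Fin.last n)) = 0 ∧ M' r (.inr (Fin.last n)) = 0)
    (x : Fin (n + 1) ⊕ Fin (n + 1) → R) :
    M' *ᵥ x = M *ᵥ (x ∘ Sum.map Fin.castSucc Fin.castSucc) := by
  ext r
  simp [mulVec, dotProduct, Fintype.sum_sum_type, Fin.sum_univ_castSucc, h₁, h₂, h₃]

theorem Matrix.mulVec_apply_of_two_entries {R ι m : Type*} [NonUnitalNonAssocSemiring R]
    [Fintype ι] [DecidableEq ι] (M : Matrix m (ι ⊕ ι) R) (r : m) {i j : ι} (hij : i ≠ j)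
    (A₁ A₂ B₁ B₂ : R)
    (h₁ : ∀ l, M r (.inl l) = if l = i then A₁ else if l = j then A₂ else 0)
    (h₂ : ∀ l, M r (.inr l) = if l = i then B₁ else if l = j then B₂ else 0)
    (x : ι ⊕ ι → R) :
    (M *ᵥ x) r = A₁ * x (.inl i) + A₂ * x (.inl j) + (B₁ * x (.inr i) + B₂ * x (.inr j)) := by
  simp only [mulVec, dotProduct, Fintype.sum_sum_type, h₁, h₂]
  rw [sum_ite_ite_mul hij, sum_ite_ite_mul hij]

theorem eq_zero_and_eq_zero_of_det_ne_zero {R : Type*} [CommRing R] [NoZeroDivisors R]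
    {p q r s u v : R} (hdet : p * s - q * r ≠ 0) (h₁ : p * u + q * v = 0)
    (h₂ : r * u + s * v = 0) : u = 0 ∧ v = 0 := by
  constructor
  · refine (mul_eq_zero.mp ?_).resolve_left hdet
    linear_combination s * h₁ - q * h₂
  · refine (mul_eq_zero.mp ?_).resolve_left hdet
    linear_combination p * h₂ - r * h₁

theorem Sum.eq_zero_of_comp_map_castSucc_eq_zero {M : Type*} [Zero M] {n : ℕ}
    {d : Fin (n + 1) ⊕ Fin (n + 1) → M} (h : d ∘ Sum.map Fin.castSucc Fin.castSucc = 0)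
    (hl : d (.inl (Fin.last n)) = 0) (hr : d (.inr (Fin.last n)) = 0) : d = 0 := by
  ext (l | l) <;> induction l using Fin.lastCases
  · exact hl
  · exact congrFun h (.inl _)
  · exact hr
  · exact congrFun h (.inr _)

theorem cross_scaled_rotation_eq (K φ a₀ b₀ a₁ b₁ : ℝ) :
    K * (Real.cos φ * a₀ + Real.sin φ * b₀) * (K * (Real.cos φ * b₁ - Real.sin φ * a₁))
      - K * (Real.cos φ * b₀ - Real.sin φ * a₀) * (K * (Real.cos φ * a₁ + Real.sin φ * b₁))
      = K ^ 2 * (a₀ * b₁ - a₁ * b₀) := by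
  linear_combination K ^ 2 * (a₀ * b₁ - a₁ * b₀) * Real.cos_sq_add_sin_sq φ

theorem Matrix.mulVec_eq_zero_iff_exists_smul {R ι κ m : Type*} [CommRing R] [Fintype ι]
    {M : Matrix m ι R} {v : ι → R} (π : κ → ι) (hv : M *ᵥ v = 0)
    (hπ : ∀ x, M *ᵥ x = 0 → ∃ c : R, x ∘ π = c • (v ∘ π))
    (hinj : ∀ d, M *ᵥ d = 0 → d ∘ π = 0 → d = 0) (x : ι → R) :
    M *ᵥ x = 0 ↔ ∃ c : R, x = c • v := by
  refine ⟨fun hx => ?_, fun ⟨c, hc⟩ => by rw [hc, mulVec_smul, hv, smul_zero]⟩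
  obtain ⟨c, hc⟩ := hπ x hx
  refine ⟨c, sub_eq_zero.mp (hinj _ ?_ ?_)⟩
  · rw [mulVec_sub, mulVec_smul, hx, hv, smul_zero, sub_zero]
  · rw [Pi.sub_comp, Pi.smul_comp, hc, sub_self]

/-- Induction step for the nullspace lemma: if the nullspace of `M⁽ᴺ⁾` is spanned
by `(−b₁..−b_N, a₁..a_N)` and `a₁ b₂ ≠ a₂ b₁`, then after appending the two rows
`r_{N+1,1}`, `r_{N+1,2}`, the nullspace of `M⁽ᴺ⁺¹⁾` is spanned by
`(−b₁..−b_{N+1}, a₁..a_{N+1})`. -/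
theorem stmt5 (N : ℕ) (hN : 5 ≤ N)
    (a b : Fin (N + 1) → ℝ) (α β : ℂ)
    (hαβ : ‖α‖ * ‖β‖ ≠ 0) (φ : ℝ)
    (hdet : a 0 * b 1 ≠ a 1 * b 0)
    (Am Ap Bm Bp : Fin (N + 1) → ℝ)
    (hAm : ∀ k, Am k = ‖α‖ * ‖β‖ * (Real.cos φ * a k - Real.sin φ * b k))
    (hAp : ∀ k, Ap k = ‖α‖ * ‖β‖ * (Real.cos φ * a k + Real.sin φ * b k))
    (hBm : ∀ k, Bm k = ‖α‖ * ‖β‖ * (Real.cos φ * b k - Real.sin φ * a k))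
    (hBp : ∀ k, Bp k = ‖α‖ * ‖β‖ * (Real.cos φ * b k + Real.sin φ * a k))
    (MN : Matrix (Fin (2 * N)) (Fin N ⊕ Fin N) ℝ)
    (hnullN : ∀ x : Fin N ⊕ Fin N → ℝ, MN.mulVec x = 0 ↔
      ∃ c : ℝ, x = c • Sum.elim (fun k : Fin N => -(b k.castSucc)) (fun k : Fin N => a k.castSucc))
    (MN1 : Matrix (Fin (2 * N) ⊕ Fin 2) (Fin (N + 1) ⊕ Fin (N + 1)) ℝ)
    (hE1 : ∀ r (k : Fin N), MN1 (Sum.inl r) (Sum.inl k.castSucc) = MN r (Sum.inl k))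
    (hE2 : ∀ r (k : Fin N), MN1 (Sum.inl r) (Sum.inr k.castSucc) = MN r (Sum.inr k))
    (hE3 : ∀ r, MN1 (Sum.inl r) (Sum.inl (Fin.last N)) = 0 ∧
                MN1 (Sum.inl r) (Sum.inr (Fin.last N)) = 0)
    (hrow1 : ∀ (t : Fin 2) (l : Fin (N + 1)),
      MN1 (Sum.inr t) (Sum.inl l) =
        if l = t.castLE (by omega) then Am (Fin.last N)
        else if l = Fin.last N then Ap (t.castLE (by omega)) else 0)
    (hrow2 : ∀ (t : Fin 2) (l : Fin (N + 1)),
      MN1 (Sum.inr t) (Sum.inr l) =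
        if l = t.castLE (by omega) then Bp (Fin.last N)
        else if l = Fin.last N then Bm (t.castLE (by omega)) else 0) :
    ∀ x : Fin (N + 1) ⊕ Fin (N + 1) → ℝ,
      MN1.mulVec x = 0 ↔ ∃ c : ℝ, x = c • Sum.elim (fun k => -(b k)) a := by
  intro x
  have hle : 2 ≤ N + 1 := by omega
  have hlast (t : Fin 2) : t.castLE hle ≠ Fin.last N := by
    simp only [ne_eq, Fin.ext_iff, Fin.val_castLE, Fin.val_last]
    omega
  have hcast₀ : (0 : Fin 2).castLE hle = 0 := rfl
  have hcast₁ : (1 : Fin 2).castLE hle = 1 := Fin.ext (Nat.mod_eq_of_lt (by omega)).symm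
  have htop (y : Fin (N + 1) ⊕ Fin (N + 1) → ℝ) (r : Fin (2 * N)) :
      (MN1 *ᵥ y) (.inl r) = (MN *ᵥ (y ∘ Sum.map Fin.castSucc Fin.castSucc)) r :=
    congrFun (MN.mulVec_eq_mulVec_comp_castSucc (MN1.submatrix Sum.inl id) hE1 hE2 hE3 y) r
  have hbot (t : Fin 2) (y : Fin (N + 1) ⊕ Fin (N + 1) → ℝ) :=
    MN1.mulVec_apply_of_two_entries (.inr t) (hlast t) _ _ _ _ (hrow1 t) (hrow2 t) y
  set v : Fin (N + 1) ⊕ Fin (N + 1) → ℝ := Sum.elim (fun k => -(b k)) a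
  have hv_cast : v ∘ Sum.map Fin.castSucc Fin.castSucc
      = Sum.elim (fun k : Fin N => -(b k.castSucc)) (fun k : Fin N => a k.castSucc) := by
    ext (k | k) <;> rfl
  have hv : MN1 *ᵥ v = 0 := by
    ext (r | t)
    · rw [htop, (hnullN _).2 ⟨1, by rw [hv_cast, one_smul]⟩]
      rfl
    · rw [hbot]
      simp only [v, Sum.elim_inl, Sum.elim_inr, hAm, hAp, hBm, hBp, Pi.zero_apply]
      ring
  refine MN1.mulVec_eq_zero_iff_exists_smul (Sum.map Fin.castSucc Fin.castSucc) hv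
    (fun y hy => ?_) (fun d hd hd_cast => ?_) x
  · rw [hv_cast]
    exact (hnullN _).1 (funext fun r => by rw [← htop, hy, Pi.zero_apply, Pi.zero_apply])
  have hd_row (t : Fin 2) : Ap (t.castLE hle) * d (.inl (Fin.last N))
      + Bm (t.castLE hle) * d (.inr (Fin.last N)) = 0 := by
    obtain ⟨k, hk⟩ := Fin.exists_castSucc_eq.2 (hlast t)
    have hl : d (.inl k.castSucc) = 0 := congrFun hd_cast (.inl k)
    have hr : d (.inr k.castSucc) = 0 := congrFun hd_cast (.inr k)
    have := hbot t d
    rw [hd, Pi.zero_apply, ← hk, hl, hr] at this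
    rw [← hk]
    linear_combination -this
  have hdet_rows : Ap 0 * Bm 1 - Bm 0 * Ap 1 ≠ 0 := by
    rw [hAp, hAp, hBm, hBm, cross_scaled_rotation_eq]
    exact mul_ne_zero (pow_ne_zero 2 hαβ) (sub_ne_zero.mpr hdet)
  obtain ⟨hl, hr⟩ := eq_zero_and_eq_zero_of_det_ne_zero hdet_rows
    (hcast₀ ▸ hd_row 0) (hcast₁ ▸ hd_row 1)
  exact Sum.eq_zero_of_comp_map_castSucc_eq_zero hd_cast hl hr
end

section
/- Let M ∈ R^{m×2N} be a real matrix whose nullspace is the span of a nonzero vector n ∈ R^{2N}, let g₀, p ∈ C^N, and suppose n = (−Im(g₀), Re(g₀)). Set x = (Re(g₀ + 2p), Im(g₀ + 2p)) ∈ R^{2N} and d = M x. Then the Moore–Penrose pseudoinverse satisfies M† d = x − t n where t = 2 Im(g₀* p) / (g₀* g₀); consequently, identifying M† d with the complex vector ½((M†d)₁..N + i (M†d)_{N+1..2N}), one recovers p + ζ g₀ with ζ = ½ − i Im(g₀* p)/(g₀* g₀). -/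
open Matrix

/-- If `M` has nullspace spanned by `n = (−Im g₀, Re g₀)` and `M† M` is the
orthogonal projection onto the orthogonal complement of the nullspace, then for
`x = (Re(g₀+2p), Im(g₀+2p))` and `d = M x` we have `M† d = x − t n` with
`t = 2 Im(g₀* p)/(g₀* g₀)`, and the recovered complex vector is `p + ζ g₀`
with `ζ = ½ − i Im(g₀* p)/(g₀* g₀)`. -/
theorem stmt7 (N m : ℕ) (g₀ p : Fin N → ℂ) (hg₀ : g₀ ≠ 0)
    (n : Fin N ⊕ Fin N → ℝ)
    (hn : n = Sum.elim (fun k => -(g₀ k).im) (fun k => (g₀ k).re))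
    (M : Matrix (Fin m) (Fin N ⊕ Fin N) ℝ)
    (Mdag : Matrix (Fin N ⊕ Fin N) (Fin m) ℝ)
    (hnull : ∀ y : Fin N ⊕ Fin N → ℝ, M.mulVec y = 0 ↔ ∃ c : ℝ, y = c • n)
    -- `M† M` is the orthogonal projection onto the orthogonal complement of `span{n}`:
    (hproj : ∀ y : Fin N ⊕ Fin N → ℝ,
      (∃ c : ℝ, y - Mdag.mulVec (M.mulVec y) = c • n) ∧
      (∑ s, Mdag.mulVec (M.mulVec y) s * n s) = 0)
    (x : Fin N ⊕ Fin N → ℝ)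
    (hx : x = Sum.elim (fun k => (g₀ k + 2 * p k).re) (fun k => (g₀ k + 2 * p k).im))
    (d : Fin m → ℝ) (hd : d = M.mulVec x)
    (t : ℝ)
    (ht : t = 2 * (∑ k, (starRingEnd ℂ) (g₀ k) * p k).im
             / (∑ k, (starRingEnd ℂ) (g₀ k) * g₀ k).re)
    (ζ : ℂ)
    (hζ : ζ = 1 / 2 - Complex.I * ((∑ k, (starRingEnd ℂ) (g₀ k) * p k).im : ℂ)
             / (∑ k, (starRingEnd ℂ) (g₀ k) * g₀ k)) :
    Mdag.mulVec d = x - t • n ∧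
    ∀ k : Fin N, (1 / 2 : ℂ) * ((Mdag.mulVec d (Sum.inl k) : ℝ)
        + Complex.I * (Mdag.mulVec d (Sum.inr k) : ℝ)) = p k + ζ * g₀ k := by
  -- notation
  set Sre : ℝ := ∑ k, Complex.normSq (g₀ k) with hSre
  set Im0 : ℝ := (∑ k, (starRingEnd ℂ) (g₀ k) * p k).im with hIm0
  have hSpos : 0 < Sre := by
    obtain ⟨k, hk⟩ := Function.ne_iff.mp hg₀
    exact Finset.sum_pos' (fun i _ => Complex.normSq_nonneg _)
      ⟨k, Finset.mem_univ k, Complex.normSq_pos.mpr hk⟩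
  have hSne : Sre ≠ 0 := ne_of_gt hSpos
  have hS : (∑ k, (starRingEnd ℂ) (g₀ k) * g₀ k) = (Sre : ℂ) := by
    rw [hSre]
    push_cast
    exact Finset.sum_congr rfl fun k _ => by
      rw [← Complex.normSq_eq_conj_mul_self]
  have hSr : (∑ k, (starRingEnd ℂ) (g₀ k) * g₀ k).re = Sre := by
    rw [hS, Complex.ofReal_re]
  have hnn : ∑ s, n s * n s = Sre := by
    rw [hn, hSre, Fintype.sum_sum_type, ← Finset.sum_add_distrib]
    exact Finset.sum_congr rfl fun k _ => by
      simp [Complex.normSq_apply]; ring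
  have hxn : ∑ s, x s * n s = 2 * Im0 := by
    rw [hx, hn, hIm0, Fintype.sum_sum_type, ← Finset.sum_add_distrib,
      Complex.im_sum, Finset.mul_sum]
    exact Finset.sum_congr rfl fun k _ => by
      simp [Complex.mul_im, Complex.add_re, Complex.add_im, Complex.mul_re]
      ring
  obtain ⟨⟨c, hc⟩, horth⟩ := hproj x
  have hPx : Mdag.mulVec (M.mulVec x) = x - c • n := by
    rw [← hc]; abel
  rw [hPx] at horth
  have hsum : (∑ s, x s * n s) - c * ∑ s, n s * n s = 0 := by
    rw [← horth, Finset.mul_sum, ← Finset.sum_sub_distrib]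
    exact Finset.sum_congr rfl fun s _ => by
      simp [Pi.sub_apply, Pi.smul_apply, smul_eq_mul]; ring
  rw [hxn, hnn] at hsum
  have hct : c = t := by
    rw [ht, hSr]
    field_simp
    linarith
  have hmain : Mdag.mulVec d = x - t • n := by
    rw [hd, hPx, hct]
  refine ⟨hmain, fun k => ?_⟩
  have hζ2 : ζ = 1 / 2 - Complex.I * ((t : ℝ) : ℂ) / 2 := by
    rw [hζ, hS, ht, hSr]
    push_cast
    have : ((Sre : ℝ) : ℂ) ≠ 0 := by exact_mod_cast hSne
    field_simp
  rw [hmain, hζ2, hx, hn]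
  simp only [Pi.sub_apply, Pi.smul_apply, smul_eq_mul, Sum.elim_inl, Sum.elim_inr]
  have h1 : ∀ z : ℂ, z = (z.re : ℂ) + z.im * Complex.I := fun z => (Complex.re_add_im z).symm
  rw [h1 (p k), h1 (g₀ k)]
  simp only [Complex.add_re, Complex.add_im, Complex.mul_re, Complex.mul_im,
    Complex.ofReal_re, Complex.ofReal_im, Complex.I_re, Complex.I_im,
    Complex.ofReal_mul, Complex.ofReal_add, Complex.ofReal_sub, Complex.ofReal_neg,
    Complex.ofReal_ofNat]
  push_cast
  ring_nf
  simp [Complex.ext_iff]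
  constructor <;> ring
end
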